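/- For all real α, β > 0 there exists N such that for all n ≥ N the following holds: if p(z) = ∏_{j=1}^n (z − z_j) is a monic polynomial of degree n with zeros z_1, …, z_n ∈ ℂ satisfying (1) |p′(z_j)| ≥ exp(n^α) for all 1 ≤ j ≤ n, and (2) min_{j≠k} |z_j − z_k| ≥ 1/n^β, then the lemniscate Λ_p = {z ∈ ℂ : |p(z)| < 1} has exactly n connected components, each of which contains exactly one of the zeros z_j. -/

import Mathlib

open MeasureTheory Filter Polynomial Metric Set
open scoped Classical ENNReal NNReal Topology

noncomputable section

/-- The logarithmic potential `U_μ(z) = ∫ log|z-w| dμ(w)`, valued in `[-∞, ∞)` (as an `EReal`),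
defined as the difference of the positive and negative parts. -/
def logPotential (μ : Measure ℂ) (z : ℂ) : EReal :=
  ((∫⁻ w, ENNReal.ofReal (Real.log (‖z - w‖)) ∂μ : ℝ≥0∞) : EReal)
    - ((∫⁻ w, ENNReal.ofReal (-Real.log (‖z - w‖)) ∂μ : ℝ≥0∞) : EReal)

/-- The logarithmic energy `I(μ) = ∫∫ log|z-w| dμ(z) dμ(w)`, valued in `EReal`. -/
def energy (μ : Measure ℂ) : EReal :=
  ((∫⁻ q : ℂ × ℂ, ENNReal.ofReal (Real.log (‖q.1 - q.2‖)) ∂(μ.prod μ) : ℝ≥0∞) : EReal)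
    - ((∫⁻ q : ℂ × ℂ, ENNReal.ofReal (-Real.log (‖q.1 - q.2‖)) ∂(μ.prod μ) : ℝ≥0∞) : EReal)

/-- Borel probability measures supported on `K`. -/
def probOn (K : Set ℂ) : Set (Measure ℂ) :=
  {μ | IsProbabilityMeasure μ ∧ μ Kᶜ = 0}

/-- `log c(K) = sup {I(μ) : μ ∈ P(K)}`. -/
def logCapacity (K : Set ℂ) : EReal :=
  ⨆ μ ∈ probOn K, energy μ

/-- The logarithmic capacity `c(K)`, with `c(K) = 0` when the sup of energies is `-∞`. -/
def capacity (K : Set ℂ) : ℝ≥0∞ :=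
  (logCapacity K).exp

/-- The filled unit lemniscate `Λ_p = {z : |p(z)| < 1}`. -/
def lemniscate (p : Polynomial ℂ) : Set ℂ := {z | ‖p.eval z‖ < 1}

/-- The number of connected components of a planar set. -/
def numComponents (S : Set ℂ) : ℕ := Nat.card (ConnectedComponents S)

/-- `𝒫_n(K)`: monic polynomials of degree `n` with all zeros in `K`. -/
def monicProdOn (K : Set ℂ) (n : ℕ) : Set (Polynomial ℂ) :=
  {p | ∃ z : Fin n → ℂ, (∀ j, z j ∈ K) ∧ p = ∏ j, (X - C (z j))}

/-- `𝒞_n(K) = sup {𝒞(Λ_p) : p ∈ 𝒫_n(K)}`. -/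
def maxComponents (K : Set ℂ) (n : ℕ) : ℕ :=
  sSup ((fun p => numComponents (lemniscate p)) '' monicProdOn K n)

/-- `M(K) = limsup 𝒞_n(K)/n`. -/
def MK (K : Set ℂ) : ℝ := limsup (fun n : ℕ => (maxComponents K n : ℝ) / n) atTop

/-- `m(K) = liminf 𝒞_n(K)/n`. -/
def mK (K : Set ℂ) : ℝ := liminf (fun n : ℕ => (maxComponents K n : ℝ) / n) atTop

/-- A bounded Jordan domain: a bounded open connected set whose boundary is the image of an
injective continuous map from the unit circle. -/
def IsJordanDomain (Ω : Set ℂ) : Prop :=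
  IsOpen Ω ∧ IsConnected Ω ∧ Bornology.IsBounded Ω ∧
    ∃ γ : (Metric.sphere (0 : ℂ) 1) → ℂ, Continuous γ ∧ Function.Injective γ ∧
      frontier Ω = Set.range γ

/-- A `C²` Jordan arc: the image of an injective `C²` map on `[0,1]` with nowhere-vanishing
derivative. -/
def IsC2JordanArc (A : Set ℂ) : Prop :=
  ∃ γ : ℝ → ℂ, ContDiff ℝ 2 γ ∧ Set.InjOn γ (Set.Icc 0 1) ∧
    (∀ t ∈ Set.Icc (0 : ℝ) 1, deriv γ t ≠ 0) ∧ A = γ '' Set.Icc 0 1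

/-- A bounded Jordan domain with `C²` boundary: bounded, open, connected, whose boundary is
parametrized by a `C²`, `2π`-periodic map, injective on `[0, 2π)`, with nowhere-vanishing
derivative. -/
def IsC2JordanDomain (Ω : Set ℂ) : Prop :=
  IsOpen Ω ∧ IsConnected Ω ∧ Bornology.IsBounded Ω ∧
    ∃ γ : ℝ → ℂ, ContDiff ℝ 2 γ ∧ Function.Periodic γ (2 * Real.pi) ∧
      Set.InjOn γ (Set.Ico 0 (2 * Real.pi)) ∧ (∀ t, deriv γ t ≠ 0) ∧
      frontier Ω = Set.range γ

/-!
Put `D = exp(n^α)`, `s = n^(-β)` and `δ = 2 / D`. On the circle `|x - z_j| = δ` every other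
factor satisfies `|x - z_i| ≥ |z_j - z_i| (1 - δ / s)`, so
`|p(x)| ≥ δ |p'(z_j)| (1 - δ / s)^(n - 1) ≥ 2 (1 - n δ / s) ≥ 1` as soon as `n^(β+1) e^(-n^α)` is
small. Hence a component of `Λ_p` through `z_j` cannot cross that circle and contains no other
zero, since the zeros are `s ≥ δ` apart. Conversely, by the minimum modulus principle every
component of the bounded open set `Λ_p` contains a zero of `p`.
-/

open Bornology

theorem IsOpen.disjoint_frontier_connectedComponentIn {X : Type*} [TopologicalSpace X]
    [LocallyConnectedSpace X] {F : Set X} (hF : IsOpen F) (x : X) :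
    Disjoint (frontier (connectedComponentIn F x)) F := by
  refine disjoint_left.2 fun y hy hyF => hy.2 ?_
  rw [hF.connectedComponentIn.interior_eq]
  obtain ⟨y', hy'y, hy'x⟩ :=
    mem_closure_iff.1 hy.1 _ hF.connectedComponentIn (mem_connectedComponentIn hyF)
  rw [connectedComponentIn_eq hy'x, ← connectedComponentIn_eq hy'y]
  exact mem_connectedComponentIn hyF

theorem IsPreconnected.subset_ball_of_disjoint_sphere {E : Type*} [PseudoMetricSpace E]
    {S : Set E} (hS : IsPreconnected S) {c : E} {r : ℝ} (hr : 0 < r) (hc : c ∈ S)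
    (hd : Disjoint S (sphere c r)) : S ⊆ ball c r := by
  refine hS.subset_of_closure_inter_subset isOpen_ball ⟨c, hc, mem_ball_self hr⟩ ?_
  rintro x ⟨hx, hxS⟩
  exact lt_of_le_of_ne (closure_ball_subset_closedBall hx) fun h => disjoint_left.1 hd hxS h

theorem ConnectedComponents.coe_eq_coe_iff_mem_connectedComponentIn {X : Type*}
    [TopologicalSpace X] {S : Set X} {a b : S} :
    (a : ConnectedComponents S) = b ↔ (a : X) ∈ connectedComponentIn S b := by
  rw [ConnectedComponents.coe_eq_coe', connectedComponentIn_eq_image b.2,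
    Subtype.coe_injective.mem_set_image]

theorem natCard_connectedComponents_eq_of_existsUnique {X ι : Type*} [TopologicalSpace X]
    {S : Set X} (z : ι → X) (hz : ∀ j, z j ∈ S)
    (h : ∀ w ∈ S, ∃! j, z j ∈ connectedComponentIn S w) :
    Nat.card (ConnectedComponents S) = Nat.card ι := by
  refine (Nat.card_eq_of_bijective (fun j => ((⟨z j, hz j⟩ : S) : ConnectedComponents S))
    ⟨fun j k hjk => ?_, fun c => ?_⟩).symm
  · rw [ConnectedComponents.coe_eq_coe_iff_mem_connectedComponentIn] at hjk
    exact (h (z k) (hz k)).unique hjk (mem_connectedComponentIn (hz k))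
  · obtain ⟨⟨w, hw⟩, rfl⟩ := ConnectedComponents.surjective_coe c
    obtain ⟨j, hj, -⟩ := h w hw
    exact ⟨j, ConnectedComponents.coe_eq_coe_iff_mem_connectedComponentIn.2 hj⟩

theorem isOpen_lemniscate (p : ℂ[X]) : IsOpen (lemniscate p) :=
  isOpen_lt (continuous_norm.comp p.continuous) continuous_const

theorem exists_isRoot_mem_connectedComponentIn_lemniscate {p : ℂ[X]}
    (hb : IsBounded (lemniscate p)) {w : ℂ} (hw : w ∈ lemniscate p) :
    ∃ x ∈ connectedComponentIn (lemniscate p) w, p.IsRoot x := by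
  set U := connectedComponentIn (lemniscate p) w
  have hfr : ∀ x ∈ frontier U, 1 ≤ ‖p.eval x‖ := fun x hx =>
    not_lt.1 (disjoint_left.1 ((isOpen_lemniscate p).disjoint_frontier_connectedComponentIn w) hx)
  by_contra! hno
  have hne : ∀ x ∈ closure U, p.eval x ≠ 0 := by
    rw [closure_eq_self_union_frontier]
    rintro x (hx | hx) h0
    · exact hno x hx h0
    · exact absurd (hfr x hx) (by simp [h0])
  have hdiff : DiffContOnCl ℂ (fun x => (p.eval x)⁻¹) U :=
    ⟨p.differentiable.differentiableOn.inv fun x hx => hne x (subset_closure hx),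
      p.continuous.continuousOn.inv₀ hne⟩
  have hle : ‖(p.eval w)⁻¹‖ ≤ 1 :=
    Complex.norm_le_of_forall_mem_frontier_norm_le (hb.subset (connectedComponentIn_subset _ _))
      hdiff (fun x hx => by simpa using inv_le_one_of_one_le₀ (hfr x hx))
      (subset_closure (mem_connectedComponentIn hw))
  rw [norm_inv, inv_le_one₀ (norm_pos_iff.2 (hno w (mem_connectedComponentIn hw)))] at hle
  exact hle.not_gt hw

section ProdXSubC

variable {ι : Type*} [Fintype ι] (z : ι → ℂ)

theorem norm_eval_prod_X_sub_C (x : ℂ) :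
    ‖(∏ i, (X - C (z i))).eval x‖ = ∏ i, ‖x - z i‖ := by
  simp [eval_prod, norm_prod]

theorem norm_derivative_eval_prod_X_sub_C (j : ι) :
    ‖(∏ i, (X - C (z i))).derivative.eval (z j)‖ = ∏ i ∈ Finset.univ.erase j, ‖z j - z i‖ := by
  rw [← Lagrange.nodal_eq, Lagrange.eval_nodal_derivative_eval_node_eq (Finset.mem_univ j),
    Lagrange.eval_nodal, norm_prod]

theorem isRoot_prod_X_sub_C_iff {x : ℂ} : (∏ i, (X - C (z i))).IsRoot x ↔ ∃ i, x = z i := by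
  rw [isRoot_prod]
  simp [sub_eq_zero]

theorem mem_lemniscate_prod_X_sub_C (j : ι) : z j ∈ lemniscate (∏ i, (X - C (z i))) := by
  have : (∏ i, (X - C (z i))).IsRoot (z j) := (isRoot_prod_X_sub_C_iff z).2 ⟨j, rfl⟩
  simp [lemniscate, this.eq_zero]

theorem isBounded_lemniscate_prod_X_sub_C : IsBounded (lemniscate (∏ i, (X - C (z i)))) := by
  refine (isBounded_iUnion.2 fun i => isBounded_ball (x := z i) (r := 1)).subset fun x hx => ?_
  by_contra hx'
  simp only [mem_iUnion, mem_ball, not_exists, not_lt, dist_eq_norm] at hx'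
  refine (show ‖(∏ i, (X - C (z i))).eval x‖ < 1 from hx).not_ge ?_
  rw [norm_eval_prod_X_sub_C]
  exact Finset.one_le_prod fun i _ => hx' i

theorem le_norm_eval_prod_X_sub_C_of_mem_sphere {s δ : ℝ} (hs : 0 < s) (hδs : δ ≤ s)
    (hsep : ∀ j k, j ≠ k → s ≤ ‖z j - z k‖) {j : ι} {x : ℂ} (hx : x ∈ sphere (z j) δ) :
    δ * ‖(∏ i, (X - C (z i))).derivative.eval (z j)‖ * (1 - δ / s) ^ (Fintype.card ι - 1)
      ≤ ‖(∏ i, (X - C (z i))).eval x‖ := by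
  have hxj : ‖x - z j‖ = δ := by rwa [mem_sphere, dist_eq_norm] at hx
  have hfactor : ∀ i ∈ Finset.univ.erase j, ‖z j - z i‖ * (1 - δ / s) ≤ ‖x - z i‖ := by
    intro i hi
    have hsi : s ≤ ‖z j - z i‖ := hsep j i (Finset.ne_of_mem_erase hi).symm
    have hδ : δ ≤ δ / s * ‖z j - z i‖ := by
      rw [div_mul_eq_mul_div, le_div_iff₀ hs]
      exact mul_le_mul_of_nonneg_left hsi (hxj ▸ norm_nonneg _)
    calc ‖z j - z i‖ * (1 - δ / s) ≤ ‖z j - z i‖ - ‖z j - x‖ := by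
          rw [norm_sub_rev (z j) x, hxj]; linarith
      _ ≤ ‖x - z i‖ := by
          linarith [norm_sub_le_norm_sub_add_norm_sub (z j) x (z i)]
  have hprod := Finset.prod_le_prod (fun i _ => mul_nonneg (norm_nonneg (z j - z i))
    (sub_nonneg.2 ((div_le_one hs).2 hδs))) hfactor
  rw [Finset.prod_mul_distrib, Finset.prod_const, Finset.card_erase_of_mem (Finset.mem_univ j),
    Finset.card_univ, ← norm_derivative_eval_prod_X_sub_C] at hprod
  rw [norm_eval_prod_X_sub_C, ← Finset.mul_prod_erase _ (fun i => ‖x - z i‖) (Finset.mem_univ j),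
    hxj, mul_assoc]
  exact mul_le_mul_of_nonneg_left hprod (hxj ▸ norm_nonneg _)

theorem existsUnique_mem_connectedComponentIn_lemniscate_of_sphere {δ : ℝ} (hδ : 0 < δ)
    (hsep : ∀ j k, j ≠ k → δ ≤ ‖z j - z k‖)
    (hsphere : ∀ j, ∀ x ∈ sphere (z j) δ, 1 ≤ ‖(∏ i, (X - C (z i))).eval x‖) {w : ℂ}
    (hw : w ∈ lemniscate (∏ i, (X - C (z i)))) :
    ∃! j, z j ∈ connectedComponentIn (lemniscate (∏ i, (X - C (z i)))) w := by
  obtain ⟨x, hx, hroot⟩ :=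
    exists_isRoot_mem_connectedComponentIn_lemniscate (isBounded_lemniscate_prod_X_sub_C z) hw
  obtain ⟨j, rfl⟩ := (isRoot_prod_X_sub_C_iff z).1 hroot
  have hball : connectedComponentIn (lemniscate (∏ i, (X - C (z i)))) w ⊆ ball (z j) δ :=
    isPreconnected_connectedComponentIn.subset_ball_of_disjoint_sphere hδ hx <|
      disjoint_left.2 fun y hy hy' =>
        not_lt.2 (hsphere j y hy') (connectedComponentIn_subset (lemniscate _) w hy)
  refine ⟨j, hx, fun k hk => ?_⟩
  by_contra hkj
  have hlt : ‖z k - z j‖ < δ := by simpa [dist_eq_norm] using hball hk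
  exact (hsep k j hkj).not_gt hlt

theorem existsUnique_mem_connectedComponentIn_lemniscate {s D : ℝ} (hs : 0 < s) (hD : 0 < D)
    (hsep : ∀ j k, j ≠ k → s ≤ ‖z j - z k‖)
    (hderiv : ∀ j, D ≤ ‖(∏ i, (X - C (z i))).derivative.eval (z j)‖)
    (hsD : 4 * Fintype.card ι ≤ s * D) {w : ℂ} (hw : w ∈ lemniscate (∏ i, (X - C (z i)))) :
    ∃! j, z j ∈ connectedComponentIn (lemniscate (∏ i, (X - C (z i)))) w := by
  have hδs : ∀ j : ι, 2 / D ≤ s := fun j => by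
    have : (1 : ℝ) ≤ Fintype.card ι := by exact_mod_cast Fintype.card_pos_iff.2 ⟨j⟩
    rw [div_le_iff₀ hD]; linarith
  refine existsUnique_mem_connectedComponentIn_lemniscate_of_sphere z (by positivity)
    (fun j k hjk => (hδs j).trans (hsep j k hjk)) (fun j x hx => ?_) hw
  have hbernoulli : 1 / 2 ≤ (1 - 2 / D / s) ^ (Fintype.card ι - 1) := by
    have ha : 0 ≤ 2 / D / s := by positivity
    have hna : 2 / D / s * Fintype.card ι ≤ 1 / 2 := by
      rw [div_div, div_mul_eq_mul_div, div_le_iff₀ (by positivity)]; linarith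
    have hm : ((Fintype.card ι - 1 : ℕ) : ℝ) ≤ Fintype.card ι := by exact_mod_cast Nat.sub_le _ _
    calc (1 : ℝ) / 2 ≤ 1 + ((Fintype.card ι - 1 : ℕ) : ℝ) * -(2 / D / s) := by nlinarith
      _ ≤ (1 - 2 / D / s) ^ (Fintype.card ι - 1) := by
        have h2 : -2 ≤ -(2 / D / s) := by linarith [(div_le_one hs).2 (hδs j)]
        simpa [sub_eq_add_neg] using one_add_mul_le_pow h2 (Fintype.card ι - 1)
  calc (1 : ℝ) = 2 / D * D * (1 / 2) := by field_simp
    _ ≤ 2 / D * ‖(∏ i, (X - C (z i))).derivative.eval (z j)‖ *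
          (1 - 2 / D / s) ^ (Fintype.card ι - 1) := by
        gcongr; exact hderiv j
    _ ≤ _ := le_norm_eval_prod_X_sub_C_of_mem_sphere z hs (hδs j) hsep hx

end ProdXSubC

theorem tendsto_rpow_mul_exp_neg_rpow_atTop_nhds_zero (γ : ℝ) {α : ℝ} (hα : 0 < α) :
    Tendsto (fun x : ℝ => x ^ γ * Real.exp (-x ^ α)) atTop (𝓝 0) := by
  refine ((tendsto_rpow_mul_exp_neg_mul_atTop_nhds_zero (γ / α) 1 one_pos).comp
    (tendsto_rpow_atTop hα)).congr' ?_
  filter_upwards [eventually_ge_atTop 0] with x hx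
  rw [Function.comp_apply, ← Real.rpow_mul hx, mul_div_cancel₀ γ hα.ne', neg_one_mul]

theorem statement12_general (α β : ℝ) (hα : 0 < α) :
    ∃ N : ℕ, ∀ n : ℕ, N ≤ n → ∀ z : Fin n → ℂ,
      (∀ j, Real.exp ((n : ℝ) ^ α) ≤
        ‖(∏ i, (X - C (z i)) : Polynomial ℂ).derivative.eval (z j)‖) →
      (∀ j k, j ≠ k → 1 / (n : ℝ) ^ β ≤ ‖z j - z k‖) →
      numComponents (lemniscate (∏ i, (X - C (z i)))) = n ∧
      ∀ w ∈ lemniscate (∏ i, (X - C (z i))),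
        ∃! j : Fin n, z j ∈ connectedComponentIn (lemniscate (∏ i, (X - C (z i)))) w := by
  have hlim := (tendsto_rpow_mul_exp_neg_rpow_atTop_nhds_zero (β + 1) hα).comp
    tendsto_natCast_atTop_atTop
  obtain ⟨N, hN⟩ := ((hlim.eventually (gt_mem_nhds (by norm_num : (0 : ℝ) < 1 / 4))).and
    (eventually_gt_atTop 0)).exists_forall_of_atTop
  refine ⟨N, fun n hn z hderiv hsep => ?_⟩
  obtain ⟨hsmall, hn⟩ := hN n hn
  have hn' : (0 : ℝ) < n := by exact_mod_cast hn
  have hsD : 4 * Fintype.card (Fin n) ≤ 1 / (n : ℝ) ^ β * Real.exp ((n : ℝ) ^ α) := by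
    simp only [Function.comp_apply, Real.rpow_add hn', Real.rpow_one, Real.exp_neg] at hsmall
    rw [mul_inv_lt_iff₀ (Real.exp_pos _)] at hsmall
    rw [Fintype.card_fin, one_div_mul_eq_div, le_div_iff₀ (by positivity)]
    linarith
  have hunique (w : ℂ) (hw : w ∈ lemniscate (∏ i, (X - C (z i)))) :=
    existsUnique_mem_connectedComponentIn_lemniscate z (by positivity) (Real.exp_pos _) hsep
      hderiv hsD hw
  refine ⟨?_, hunique⟩
  rw [numComponents, natCard_connectedComponents_eq_of_existsUnique z
    (mem_lemniscate_prod_X_sub_C z) hunique, Nat.card_fin]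

/-- For all `α, β > 0` there is `N` such that for all `n ≥ N`: any monic
polynomial `p = ∏ (z - z_j)` of degree `n` with `|p'(z_j)| ≥ exp(n^α)` for all `j` and
`min_{j≠k} |z_j - z_k| ≥ 1/n^β` has a unit lemniscate with exactly `n` connected components,
each containing exactly one of the zeros. -/
theorem statement12 (α β : ℝ) (hα : 0 < α) (hβ : 0 < β) :
    ∃ N : ℕ, ∀ n : ℕ, N ≤ n → ∀ z : Fin n → ℂ,
      (∀ j, Real.exp ((n : ℝ) ^ α) ≤
        ‖(∏ i, (X - C (z i)) : Polynomial ℂ).derivative.eval (z j)‖) →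
      (∀ j k, j ≠ k → 1 / (n : ℝ) ^ β ≤ ‖z j - z k‖) →
      numComponents (lemniscate (∏ i, (X - C (z i)))) = n ∧
      ∀ w ∈ lemniscate (∏ i, (X - C (z i))),
        ∃! j : Fin n, z j ∈ connectedComponentIn (lemniscate (∏ i, (X - C (z i)))) w :=
  statement12_general α β hα
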